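/- Let a ∈ (0,∞], I = [0,a), let F₁ and F₂ be admissible on I, and let Ω be a convex domain in ℝⁿ (n ≥ 1). Then C_Ω[F₂] ⊆ C_Ω[F₁] if and only if C_ℝ[F₂] ⊆ C_ℝ[F₁] (where ℝ is regarded as a convex domain in ℝ¹), and C_Ω[F₂] ⊊ C_Ω[F₁] if and only if C_ℝ[F₂] ⊊ C_ℝ[F₁]. In particular, the hierarchy of F-concavities is independent of the convex domain Ω and of the dimension n. -/

import Mathlib

open Set Filter
open scoped ENNReal Topology

noncomputable section

/-- The interval `I = [0,a)` for `a ∈ (0,∞]`, as a subset of `ℝ`. -/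
def intervalI (a : ℝ≥0∞) : Set ℝ := {r : ℝ | 0 ≤ r ∧ ENNReal.ofReal r < a}

/-- The interior `(0,a)` of `I = [0,a)`. -/
def intervalI₀ (a : ℝ≥0∞) : Set ℝ := {r : ℝ | 0 < r ∧ ENNReal.ofReal r < a}

/-- `F : I → [-∞,∞)` is admissible on `I = [0,a)`: continuous on `(0,a)`,
strictly increasing on `I`, `F(0) = -∞`, and never `+∞` on `I`. -/
structure IsAdmissible (a : ℝ≥0∞) (F : ℝ → EReal) : Prop where
  continuousOn : ContinuousOn F (intervalI₀ a)
  strictMonoOn : StrictMonoOn F (intervalI a)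
  map_zero : F 0 = ⊥
  lt_top : ∀ r ∈ intervalI a, F r < ⊤

/-- `f` is `F`-concave on `Ω`:
`F(f((1-λ)x+λy)) ≥ (1-λ)F(f(x)) + λF(f(y))` for `x,y ∈ Ω`, `λ ∈ (0,1)`. -/
def FConcaveOn {E : Type*} [AddCommGroup E] [Module ℝ E]
    (F : ℝ → EReal) (Ω : Set E) (f : E → ℝ) : Prop :=
  ∀ x ∈ Ω, ∀ y ∈ Ω, ∀ lam : ℝ, lam ∈ Ioo (0:ℝ) 1 →
    ((1 - lam : ℝ) : EReal) * F (f x) + (lam : EReal) * F (f y)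
      ≤ F (f ((1 - lam) • x + lam • y))

/-- `C_Ω[F]`: the set of `F`-concave functions on `Ω` with values in `I = [0,a)`. -/
def CSet {E : Type*} [AddCommGroup E] [Module ℝ E]
    (a : ℝ≥0∞) (F : ℝ → EReal) (Ω : Set E) : Set (E → ℝ) :=
  {f | MapsTo f Ω (intervalI a) ∧ FConcaveOn F Ω f}

/-!
`C_Ω[F₂] ⊆ C_Ω[F₁]` holds exactly when `F₁ ∘ f_{F₂}` is concave on `J_{F₂}`, a condition that
involves neither `Ω` nor `n`. If the condition holds, `F₂`-concavity of `f` along a segment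
passes to `F₁`-concavity through the intermediate value theorem for `F₂` and monotonicity of `F₁`.
Conversely, take two points `x ≠ y` of `Ω` and values `s, t, u` with
`F₂ u = (1-λ) F₂ s + λ F₂ t`. The truncated inverse `w ↦ f_{F₂}(min w c)`, with
`c = F₂ (max s t)` and extended by `0` where `min w c ∉ J_{F₂}`, is `F₂`-concave on `ℝ`, because
`F₂` of it is `min w c` or `-∞`. Composed with an affine functional sending `x, y` to
`F₂ s, F₂ t`, it gives a function in `C_Ω[F₂]` taking the values `s, t, u` at `x, y, (1-λ)x + λy`,
and its `F₁`-concavity there is the required inequality.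
-/

open Function

/-- Concavity of `F₁ ∘ f_{F₂}` on `J_{F₂}`, written without the inverse `f_{F₂}`. -/
def IsConcaveCompInv (a : ℝ≥0∞) (F₁ F₂ : ℝ → EReal) : Prop :=
  ∀ s ∈ intervalI₀ a, ∀ t ∈ intervalI₀ a, ∀ u ∈ intervalI₀ a, ∀ lam ∈ Ioo (0:ℝ) 1,
    F₂ u = ((1 - lam : ℝ) : EReal) * F₂ s + (lam : EReal) * F₂ t →
    ((1 - lam : ℝ) : EReal) * F₁ s + (lam : EReal) * F₁ t ≤ F₁ u

lemma coe_convexCombo (lam σ τ : ℝ) :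
    ((1 - lam : ℝ) : EReal) * σ + (lam : EReal) * τ = (((1 - lam) * σ + lam * τ : ℝ) : EReal) := by
  norm_cast

lemma coe_convexCombo_mem_uIcc {lam : ℝ} (hlam : lam ∈ Ioo (0:ℝ) 1) (σ τ : ℝ) :
    ((1 - lam : ℝ) : EReal) * σ + (lam : EReal) * τ ∈ uIcc (σ : EReal) τ := by
  obtain ⟨hlam₀, hlam₁⟩ := hlam
  rw [coe_convexCombo]
  rcases le_total σ τ with h | h
  · rw [uIcc_of_le (EReal.coe_le_coe h)]
    exact ⟨EReal.coe_le_coe (by nlinarith), EReal.coe_le_coe (by nlinarith)⟩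
  · rw [uIcc_of_ge (EReal.coe_le_coe h)]
    exact ⟨EReal.coe_le_coe (by nlinarith), EReal.coe_le_coe (by nlinarith)⟩

lemma convexCombo_le_of_forall_coe {p q r : EReal} {lam : ℝ} (hlam : lam ∈ Ioo (0:ℝ) 1)
    (hp : p ≠ ⊤) (hq : q ≠ ⊤)
    (h : ∀ σ τ : ℝ, p = σ → q = τ → (((1 - lam) * σ + lam * τ : ℝ) : EReal) ≤ r) :
    ((1 - lam : ℝ) : EReal) * p + (lam : EReal) * q ≤ r := by
  induction p using EReal.rec with
  | bot =>
    rw [EReal.mul_bot_of_pos (EReal.coe_pos.2 (sub_pos.2 hlam.2)), EReal.bot_add]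
    exact bot_le
  | top => exact absurd rfl hp
  | coe σ =>
    induction q using EReal.rec with
    | bot =>
      rw [EReal.mul_bot_of_pos (EReal.coe_pos.2 hlam.1), EReal.add_bot]
      exact bot_le
    | top => exact absurd rfl hq
    | coe τ => exact coe_convexCombo lam σ τ ▸ h σ τ rfl rfl

section Intervals

variable {a : ℝ≥0∞} {s : ℝ}

lemma intervalI₀_subset_intervalI : intervalI₀ a ⊆ intervalI a := fun _ hr => ⟨hr.1.le, hr.2⟩

lemma zero_mem_intervalI (ha : 0 < a) : (0 : ℝ) ∈ intervalI a := ⟨le_rfl, by simpa using ha⟩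

lemma pos_of_mem_intervalI₀ (hs : s ∈ intervalI₀ a) : 0 < a := zero_le.trans_lt hs.2

lemma ordConnected_intervalI₀ : (intervalI₀ a).OrdConnected :=
  ⟨fun _ hs _ ht _ hr => ⟨hs.1.trans_le hr.1, (ENNReal.ofReal_le_ofReal hr.2).trans_lt ht.2⟩⟩

end Intervals

namespace IsAdmissible

variable {a : ℝ≥0∞} {F : ℝ → EReal} {s : ℝ}

lemma bot_lt (hF : IsAdmissible a F) (hs : s ∈ intervalI₀ a) : ⊥ < F s := by
  have h0 := zero_mem_intervalI (pos_of_mem_intervalI₀ hs)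
  simpa [hF.map_zero] using hF.strictMonoOn h0 (intervalI₀_subset_intervalI hs) hs.1

lemma coe_toReal (hF : IsAdmissible a F) (hs : s ∈ intervalI₀ a) :
    (((F s).toReal : ℝ) : EReal) = F s :=
  EReal.coe_toReal (hF.lt_top s (intervalI₀_subset_intervalI hs)).ne (hF.bot_lt hs).ne'

lemma mem_intervalI₀ (hF : IsAdmissible a F) (hs : s ∈ intervalI a) (h : F s ≠ ⊥) :
    s ∈ intervalI₀ a :=
  ⟨hs.1.lt_of_ne (by rintro rfl; exact h hF.map_zero), hs.2⟩

lemma ordConnected_image (hF : IsAdmissible a F) : (F '' intervalI₀ a).OrdConnected :=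
  (ordConnected_intervalI₀.isPreconnected.image F hF.continuousOn).ordConnected

end IsAdmissible

theorem cset_subset_of_isConcaveCompInv {E : Type*} [AddCommGroup E] [Module ℝ E]
    {a : ℝ≥0∞} {F₁ F₂ : ℝ → EReal} (hF₁ : IsAdmissible a F₁) (hF₂ : IsAdmissible a F₂)
    (h : IsConcaveCompInv a F₁ F₂) {Ω : Set E} (hΩ : Convex ℝ Ω) :
    CSet a F₂ Ω ⊆ CSet a F₁ Ω := by
  rintro f ⟨hmaps, hconc⟩
  refine ⟨hmaps, fun x hx y hy lam hlam => ?_⟩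
  set z := (1 - lam) • x + lam • y
  have hz : f z ∈ intervalI a :=
    hmaps (hΩ hx hy (sub_pos.2 hlam.2).le hlam.1.le (sub_add_cancel 1 lam))
  refine convexCombo_le_of_forall_coe hlam (hF₁.lt_top _ (hmaps hx)).ne
    (hF₁.lt_top _ (hmaps hy)).ne fun σ τ hσ hτ => ?_
  have hs := hF₁.mem_intervalI₀ (hmaps hx) (hσ ▸ EReal.coe_ne_bot σ)
  have ht := hF₁.mem_intervalI₀ (hmaps hy) (hτ ▸ EReal.coe_ne_bot τ)
  rw [← coe_convexCombo, ← hσ, ← hτ]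
  have hJ : ((1 - lam : ℝ) : EReal) * F₂ (f x) + (lam : EReal) * F₂ (f y) ∈ F₂ '' intervalI₀ a := by
    have hmem := coe_convexCombo_mem_uIcc hlam (F₂ (f x)).toReal (F₂ (f y)).toReal
    rw [hF₂.coe_toReal hs, hF₂.coe_toReal ht] at hmem
    exact hF₂.ordConnected_image.uIcc_subset (mem_image_of_mem F₂ hs) (mem_image_of_mem F₂ ht) hmem
  obtain ⟨u, hu, hFu⟩ := hJ
  have huz : u ≤ f z := (hF₂.strictMonoOn.le_iff_le (intervalI₀_subset_intervalI hu) hz).1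
    (hFu ▸ hconc x hx y hy lam hlam)
  calc _ ≤ F₁ u := h _ hs _ ht u hu lam hlam hFu
    _ ≤ F₁ (f z) := hF₁.strictMonoOn.monotoneOn (intervalI₀_subset_intervalI hu) hz huz

section TruncInv

variable {a : ℝ≥0∞} {F : ℝ → EReal} {c w v : ℝ}

open Classical in
def truncInv (a : ℝ≥0∞) (F : ℝ → EReal) (c w : ℝ) : ℝ :=
  if ((min w c : ℝ) : EReal) ∈ F '' intervalI₀ a then
    invFunOn F (intervalI₀ a) ((min w c : ℝ) : EReal)
  else 0

lemma truncInv_spec (h : ((min w c : ℝ) : EReal) ∈ F '' intervalI₀ a) :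
    truncInv a F c w ∈ intervalI₀ a ∧ F (truncInv a F c w) = (min w c : ℝ) := by
  rw [truncInv, if_pos h]
  exact ⟨invFunOn_mem h, invFunOn_eq h⟩

lemma apply_truncInv_of_notMem (hF : IsAdmissible a F)
    (h : ((min w c : ℝ) : EReal) ∉ F '' intervalI₀ a) : F (truncInv a F c w) = ⊥ := by
  rw [truncInv, if_neg h, hF.map_zero]

lemma mem_image_and_eq_of_apply_truncInv_eq_coe (hF : IsAdmissible a F) {ρ : ℝ}
    (hρ : F (truncInv a F c w) = ρ) :
    ((min w c : ℝ) : EReal) ∈ F '' intervalI₀ a ∧ ρ = min w c := by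
  by_cases h : ((min w c : ℝ) : EReal) ∈ F '' intervalI₀ a
  · exact ⟨h, EReal.coe_injective (hρ.symm.trans (truncInv_spec h).2)⟩
  · exact absurd (hρ.symm.trans (apply_truncInv_of_notMem hF h)) (EReal.coe_ne_bot ρ)

lemma truncInv_mem_intervalI (ha : 0 < a) : truncInv a F c w ∈ intervalI a := by
  by_cases h : ((min w c : ℝ) : EReal) ∈ F '' intervalI₀ a
  · exact intervalI₀_subset_intervalI (truncInv_spec h).1
  · rw [truncInv, if_neg h]
    exact zero_mem_intervalI ha

lemma truncInv_eq (hF : IsAdmissible a F) (hv : v ∈ intervalI₀ a) (hFv : F v = w) (hwc : w ≤ c) :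
    truncInv a F c w = v := by
  have h : ((min w c : ℝ) : EReal) ∈ F '' intervalI₀ a := by
    rw [min_eq_left hwc]
    exact ⟨v, hv, hFv⟩
  refine hF.strictMonoOn.injOn (intervalI₀_subset_intervalI (truncInv_spec h).1)
    (intervalI₀_subset_intervalI hv) ?_
  rw [(truncInv_spec h).2, min_eq_left hwc, hFv]

lemma truncInv_mem_cset (hF : IsAdmissible a F) (hc : (c : EReal) ∈ F '' intervalI₀ a) :
    truncInv a F c ∈ CSet a F univ := by
  have ha : 0 < a := by
    obtain ⟨v, hv, -⟩ := hc
    exact pos_of_mem_intervalI₀ hv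
  refine ⟨fun _ _ => truncInv_mem_intervalI ha, fun w₁ _ w₂ _ lam hlam => ?_⟩
  refine convexCombo_le_of_forall_coe hlam (hF.lt_top _ (truncInv_mem_intervalI ha)).ne
    (hF.lt_top _ (truncInv_mem_intervalI ha)).ne fun σ τ hσ hτ => ?_
  obtain ⟨h₁, rfl⟩ := mem_image_and_eq_of_apply_truncInv_eq_coe hF hσ
  obtain ⟨h₂, rfl⟩ := mem_image_and_eq_of_apply_truncInv_eq_coe hF hτ
  obtain ⟨hlam₀, hlam₁⟩ := hlam
  have hcombo : (1 - lam) * min w₁ c + lam * min w₂ c ≤ min ((1 - lam) * w₁ + lam * w₂) c :=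
    le_min (by nlinarith [min_le_left w₁ c, min_le_left w₂ c])
      (by nlinarith [min_le_right w₁ c, min_le_right w₂ c])
  have hmem : ((min ((1 - lam) * w₁ + lam * w₂) c : ℝ) : EReal) ∈ F '' intervalI₀ a := by
    have hupper : ((min ((1 - lam) * w₁ + lam * w₂) c : ℝ) : EReal) ≤ c :=
      EReal.coe_le_coe (min_le_right _ _)
    rcases le_total (min w₁ c) (min w₂ c) with h | h
    · exact hF.ordConnected_image.out h₁ hc ⟨EReal.coe_le_coe (by nlinarith [hcombo]), hupper⟩
    · exact hF.ordConnected_image.out h₂ hc ⟨EReal.coe_le_coe (by nlinarith [hcombo]), hupper⟩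
  simp only [smul_eq_mul]
  rw [(truncInv_spec hmem).2]
  exact EReal.coe_le_coe hcombo

end TruncInv

lemma comp_affineMap_mem_cset {E E' : Type*} [AddCommGroup E] [Module ℝ E] [AddCommGroup E']
    [Module ℝ E'] {a : ℝ≥0∞} {F : ℝ → EReal} {s : Set E'} {g : E' → ℝ} (hg : g ∈ CSet a F s)
    (ℓ : E →ᵃ[ℝ] E') {Ω : Set E} (hℓ : MapsTo ℓ Ω s) : g ∘ ℓ ∈ CSet a F Ω :=
  ⟨hg.1.comp hℓ, fun x hx y hy lam hlam => by
    simpa only [comp_apply, Convex.combo_affine_apply (sub_add_cancel 1 lam)] using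
      hg.2 _ (hℓ hx) _ (hℓ hy) lam hlam⟩

lemma exists_affineMap_apply_eq {E : Type*} [AddCommGroup E] [Module ℝ E] {x y : E} (hxy : x ≠ y)
    (σ τ : ℝ) : ∃ ℓ : E →ᵃ[ℝ] ℝ, ℓ x = σ ∧ ℓ y = τ := by
  obtain ⟨φ, hφ⟩ : ∃ φ : Module.Dual ℝ E, φ (y - x) ≠ 0 := by
    by_contra! h
    exact hxy (sub_eq_zero.1 ((Module.forall_dual_apply_eq_zero_iff ℝ _).1 h)).symm
  have hφ' : φ y - φ x ≠ 0 := by rwa [map_sub] at hφ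
  refine ⟨(((τ - σ) / φ (y - x)) • φ).toAffineMap +
    AffineMap.const ℝ E (σ - (τ - σ) / φ (y - x) * φ x), ?_, ?_⟩ <;>
  simp only [map_sub, AffineMap.coe_add, LinearMap.coe_toAffineMap, LinearMap.coe_smul,
    AffineMap.coe_const, Pi.add_apply, Pi.smul_apply, smul_eq_mul, const_apply]
  · ring
  · field_simp
    ring

theorem isConcaveCompInv_of_cset_subset {E : Type*} [AddCommGroup E] [Module ℝ E] {a : ℝ≥0∞}
    {F₁ F₂ : ℝ → EReal} (hF₂ : IsAdmissible a F₂) {Ω : Set E} {x y : E} (hx : x ∈ Ω)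
    (hy : y ∈ Ω) (hxy : x ≠ y) (h : CSet a F₂ Ω ⊆ CSet a F₁ Ω) : IsConcaveCompInv a F₁ F₂ := by
  intro s hs t ht u hu lam hlam hFu
  have hmax : max s t ∈ intervalI₀ a := max_rec' _ hs ht
  obtain ⟨σ, hσ⟩ : ∃ σ : ℝ, (σ : EReal) = F₂ s := ⟨_, hF₂.coe_toReal hs⟩
  obtain ⟨τ, hτ⟩ : ∃ τ : ℝ, (τ : EReal) = F₂ t := ⟨_, hF₂.coe_toReal ht⟩
  obtain ⟨c, hc⟩ : ∃ c : ℝ, (c : EReal) = F₂ (max s t) := ⟨_, hF₂.coe_toReal hmax⟩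
  have hmono := hF₂.strictMonoOn.monotoneOn.mono intervalI₀_subset_intervalI
  have hσc : σ ≤ c := EReal.coe_le_coe_iff.1 (hσ ▸ hc ▸ hmono hs hmax (le_max_left s t))
  have hτc : τ ≤ c := EReal.coe_le_coe_iff.1 (hτ ▸ hc ▸ hmono ht hmax (le_max_right s t))
  obtain ⟨ℓ, hℓx, hℓy⟩ := exists_affineMap_apply_eq hxy σ τ
  have hf : truncInv a F₂ c ∘ ℓ ∈ CSet a F₁ Ω :=
    h (comp_affineMap_mem_cset (truncInv_mem_cset hF₂ ⟨_, hmax, hc.symm⟩) ℓ (mapsTo_univ _ _))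
  have hfx : truncInv a F₂ c (ℓ x) = s := by
    rw [hℓx]
    exact truncInv_eq hF₂ hs hσ.symm hσc
  have hfy : truncInv a F₂ c (ℓ y) = t := by
    rw [hℓy]
    exact truncInv_eq hF₂ ht hτ.symm hτc
  have hfz : truncInv a F₂ c (ℓ ((1 - lam) • x + lam • y)) = u := by
    rw [Convex.combo_affine_apply (sub_add_cancel 1 lam), hℓx, hℓy, smul_eq_mul, smul_eq_mul]
    refine truncInv_eq hF₂ hu (by rw [hFu, ← hσ, ← hτ, coe_convexCombo]) ?_
    nlinarith [hlam.1, hlam.2]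
  simpa only [comp_apply, hfx, hfy, hfz] using hf.2 x hx y hy lam hlam

theorem cset_subset_iff_isConcaveCompInv {E : Type*} [AddCommGroup E] [Module ℝ E] {a : ℝ≥0∞}
    {F₁ F₂ : ℝ → EReal} (hF₁ : IsAdmissible a F₁) (hF₂ : IsAdmissible a F₂) {Ω : Set E}
    (hΩ : Convex ℝ Ω) (hΩnt : Ω.Nontrivial) :
    CSet a F₂ Ω ⊆ CSet a F₁ Ω ↔ IsConcaveCompInv a F₁ F₂ := by
  obtain ⟨x, hx, y, hy, hxy⟩ := hΩnt
  exact ⟨isConcaveCompInv_of_cset_subset hF₂ hx hy hxy,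
    fun h => cset_subset_of_isConcaveCompInv hF₁ hF₂ h hΩ⟩

theorem stmt2_general {n : ℕ} (hn : 1 ≤ n) (a : ℝ≥0∞)
    (F₁ F₂ : ℝ → EReal) (hF₁ : IsAdmissible a F₁) (hF₂ : IsAdmissible a F₂)
    (Ω : Set (EuclideanSpace ℝ (Fin n)))
    (hΩconv : Convex ℝ Ω) (hΩopen : IsOpen Ω) (hΩne : Ω.Nonempty) :
    (CSet a F₂ Ω ⊆ CSet a F₁ Ω ↔
      CSet a F₂ (univ : Set ℝ) ⊆ CSet a F₁ (univ : Set ℝ)) ∧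
    (CSet a F₂ Ω ⊂ CSet a F₁ Ω ↔
      CSet a F₂ (univ : Set ℝ) ⊂ CSet a F₁ (univ : Set ℝ)) := by
  have : Nonempty (Fin n) := ⟨⟨0, hn⟩⟩
  obtain ⟨p, hp⟩ := hΩne
  have hΩnt : Ω.Nontrivial := (infinite_of_mem_nhds p (hΩopen.mem_nhds hp)).nontrivial
  have key : ∀ {G₁ G₂ : ℝ → EReal}, IsAdmissible a G₁ → IsAdmissible a G₂ →
      (CSet a G₂ Ω ⊆ CSet a G₁ Ω ↔ CSet a G₂ (univ : Set ℝ) ⊆ CSet a G₁ univ) :=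
    fun hG₁ hG₂ => (cset_subset_iff_isConcaveCompInv hG₁ hG₂ hΩconv hΩnt).trans
      (cset_subset_iff_isConcaveCompInv hG₁ hG₂ convex_univ nontrivial_univ).symm
  exact ⟨key hF₁ hF₂, by simp only [ssubset_iff_subset_not_subset, key hF₁ hF₂, key hF₂ hF₁]⟩

/-- the hierarchy of `F`-concavities is independent of the convex
domain `Ω` and of the dimension `n`: inclusion (resp. strict inclusion) of
`C_Ω[F₂]` in `C_Ω[F₁]` is equivalent to the corresponding inclusion for the
convex domain `ℝ` in `ℝ¹`. -/
theorem stmt2 {n : ℕ} (hn : 1 ≤ n) (a : ℝ≥0∞) (ha : 0 < a)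
    (F₁ F₂ : ℝ → EReal) (hF₁ : IsAdmissible a F₁) (hF₂ : IsAdmissible a F₂)
    (Ω : Set (EuclideanSpace ℝ (Fin n)))
    (hΩconv : Convex ℝ Ω) (hΩopen : IsOpen Ω) (hΩne : Ω.Nonempty) :
    (CSet a F₂ Ω ⊆ CSet a F₁ Ω ↔
      CSet a F₂ (univ : Set ℝ) ⊆ CSet a F₁ (univ : Set ℝ)) ∧
    (CSet a F₂ Ω ⊂ CSet a F₁ Ω ↔
      CSet a F₂ (univ : Set ℝ) ⊂ CSet a F₁ (univ : Set ℝ)) :=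
  stmt2_general hn a F₁ F₂ hF₁ hF₂ Ω hΩconv hΩopen hΩne
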